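/- The quotient of the presented group K₂ = ⟨m, b ∣ [m, b²] = 1, [m², b] = 1⟩ by the normal closure of the subset {m², b²} is isomorphic to the free product (ℤ/2ℤ) * (ℤ/2ℤ). -/

import Mathlib

open scoped commutatorElement in
/-- The relators of `K₂ = ⟨m, b ∣ [m, b²] = 1, [m², b] = 1⟩`, with generators
`m = 0`, `b = 1`. -/
def relsK2 : Set (FreeGroup (Fin 2)) :=
  let m : FreeGroup (Fin 2) := FreeGroup.of 0
  let b : FreeGroup (Fin 2) := FreeGroup.of 1
  { ⁅m, b ^ 2⁆, ⁅m ^ 2, b⁆ }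

/-- `K₂ = ⟨m, b ∣ [m, b²] = 1, [m², b] = 1⟩`. -/
abbrev K2 := PresentedGroup relsK2

/-!
Modulo `m²` and `b²` both defining commutators of `K₂` become trivial, so the quotient is
`⟨m, b ∣ m², b²⟩`. Sending `m, b` to the generators of the two factors and back gives mutually
inverse homomorphisms, as each composite fixes generators.
-/

open Multiplicative

section ZModLift

variable {G : Type*} [Group G] {n : ℕ}

def zmodLift (x : G) (hx : x ^ n = 1) : Multiplicative (ZMod n) →* G :=
  AddMonoidHom.toMultiplicativeLeft <|
    ZMod.lift n ⟨zmultiplesHom _ (Additive.ofMul x), by simp [← ofMul_pow, hx]⟩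

@[simp]
theorem zmodLift_ofAdd_one (x : G) (hx : x ^ n = 1) : zmodLift x hx (ofAdd 1) = x := by
  have := ZMod.lift_coe n ⟨zmultiplesHom _ (Additive.ofMul x), by simp [← ofMul_pow, hx]⟩ 1
  simp only [Int.cast_one, zmultiplesHom_apply, one_zsmul] at this
  exact congrArg Additive.toMul this

theorem MonoidHom.ext_zmod {f g : Multiplicative (ZMod n) →* G}
    (h : f (ofAdd 1) = g (ofAdd 1)) : f = g := by
  refine MonoidHom.ext fun a => ?_
  obtain ⟨k, hk⟩ := ZMod.intCast_surjective (toAdd a)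
  rw [show a = ofAdd 1 ^ k by rw [← ofAdd_zsmul, zsmul_one, hk, ofAdd_toAdd]]
  simp only [map_zpow, h]

end ZModLift

namespace K2

open PresentedGroup Monoid.Coprod

theorem lift_eq_one_of_mem_relsK2 {G : Type*} [Group G] {x y : G} (hx : x ^ 2 = 1)
    (hy : y ^ 2 = 1) : ∀ r ∈ relsK2, FreeGroup.lift ![x, y] r = 1 := by
  rintro r (rfl | rfl) <;> simp [map_commutatorElement, hx, hy]

def liftOfSqEqOne {G : Type*} [Group G] {x y : G} (hx : x ^ 2 = 1) (hy : y ^ 2 = 1) :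
    K2 →* G :=
  toGroup (lift_eq_one_of_mem_relsK2 hx hy)

local notation "N" => Subgroup.normalClosure {(of 0 : K2) ^ 2, (of 1 : K2) ^ 2}

local notation "C₂" => Multiplicative (ZMod 2)

theorem mk_of_sq (i : Fin 2) : ((of i : K2) : K2 ⧸ N) ^ 2 = 1 := by
  rw [← QuotientGroup.mk_pow, QuotientGroup.eq_one_iff]
  apply Subgroup.subset_normalClosure
  fin_cases i <;> simp

theorem ofAdd_one_sq : (ofAdd 1 : C₂) ^ 2 = 1 := by decide

theorem inl_sq : (inl (ofAdd 1) : Monoid.Coprod C₂ C₂) ^ 2 = 1 := by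
  rw [← map_pow, ofAdd_one_sq, map_one]

theorem inr_sq : (inr (ofAdd 1) : Monoid.Coprod C₂ C₂) ^ 2 = 1 := by
  rw [← map_pow, ofAdd_one_sq, map_one]

def toCoprod : K2 ⧸ N →* Monoid.Coprod C₂ C₂ :=
  QuotientGroup.lift N (liftOfSqEqOne inl_sq inr_sq) <| Subgroup.normalClosure_le_normal <| by
    rintro _ (rfl | rfl) <;> simp [liftOfSqEqOne, inl_sq, inr_sq]

def ofCoprod : Monoid.Coprod C₂ C₂ →* K2 ⧸ N :=
  Monoid.Coprod.lift (zmodLift _ (mk_of_sq 0)) (zmodLift _ (mk_of_sq 1))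

theorem ofCoprod_comp_toCoprod : ofCoprod.comp toCoprod = MonoidHom.id _ := by
  refine QuotientGroup.monoidHom_ext _ <| PresentedGroup.ext fun i => ?_
  fin_cases i <;> simp [toCoprod, ofCoprod, liftOfSqEqOne]

theorem toCoprod_comp_ofCoprod : toCoprod.comp ofCoprod = MonoidHom.id _ := by
  apply Monoid.Coprod.hom_ext <;> apply MonoidHom.ext_zmod <;>
    simp [toCoprod, ofCoprod, liftOfSqEqOne]

end K2

/-- The quotient of `K₂` by the normal closure of `{m², b²}` is
isomorphic to the free product `(ℤ/2ℤ) * (ℤ/2ℤ)`. -/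
theorem K2_quotient_iso_free_product :
    Nonempty
      ((K2 ⧸ Subgroup.normalClosure
          {(PresentedGroup.of 0 : K2) ^ 2, (PresentedGroup.of 1 : K2) ^ 2}) ≃*
        Monoid.Coprod (Multiplicative (ZMod 2)) (Multiplicative (ZMod 2))) :=
  ⟨K2.toCoprod.toMulEquiv K2.ofCoprod K2.ofCoprod_comp_toCoprod K2.toCoprod_comp_ofCoprod⟩
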